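/- Vanishing of the gradient-ascent direction at the optimal diffusion: let η > 0, Λ ≥ 0, T > 0, and define v(t,w) := 1 − exp(−ηw − ½Λ²(T−t)) on [0,T]×ℝ and σ := Λ/η. Then for every (t,w) ∈ [0,T]×ℝ, −Λ |∂_w v(t,w)| − σ ∂²_{ww} v(t,w) = 0; that is, the gradient direction ℓ₀₀(t,w) = −Λ|∂_w v| − σ ∂²_{ww} v vanishes identically. Moreover, for fixed (t,w), σ = Λ/η is the unique σ ∈ ℝ for which −Λ|∂_w v(t,w)| − σ ∂²_{ww} v(t,w) = 0. -/

import Mathlib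

open Set

noncomputable section

lemma deriv_aux (η c : ℝ) (w : ℝ) :
    deriv (fun w' : ℝ => 1 - Real.exp (-η * w' - c)) w = η * Real.exp (-η * w - c) := by
  have h1 : HasDerivAt (fun w' : ℝ => -η * w' - c) (-η) w := by
    simpa using ((hasDerivAt_id w).const_mul (-η)).sub_const c
  have h2 : HasDerivAt (fun w' : ℝ => 1 - Real.exp (-η * w' - c))
      (η * Real.exp (-η * w - c)) w := by
    have := (Real.hasDerivAt_exp (-η * w - c)).comp w h1
    have h3 := (hasDerivAt_const w (1:ℝ)).sub this
    exact h3.congr_deriv (by ring)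
  exact h2.deriv

lemma deriv2_aux (η c : ℝ) (w : ℝ) :
    deriv (deriv (fun w' : ℝ => 1 - Real.exp (-η * w' - c))) w
      = -η ^ 2 * Real.exp (-η * w - c) := by
  have heq : deriv (fun w' : ℝ => 1 - Real.exp (-η * w' - c))
      = fun w' => η * Real.exp (-η * w' - c) := funext fun w' => deriv_aux η c w'
  rw [heq]
  have h1 : HasDerivAt (fun w' : ℝ => -η * w' - c) (-η) w := by
    simpa using ((hasDerivAt_id w).const_mul (-η)).sub_const c
  have h2 : HasDerivAt (fun w' : ℝ => η * Real.exp (-η * w' - c))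
      (-η ^ 2 * Real.exp (-η * w - c)) w := by
    have := ((Real.hasDerivAt_exp (-η * w - c)).comp w h1).const_mul η
    exact this.congr_deriv (by ring)
  exact h2.deriv

/-- **Vanishing of the gradient-ascent direction at the optimal diffusion.** Let `η > 0`,
`Λ ≥ 0`, `T > 0`, `v(t,w) = 1 - exp(-ηw - ½Λ²(T-t))` and `σ = Λ/η`. Then on `[0,T] × ℝ` the
gradient direction `ℓ₀₀(t,w) = -Λ|∂_w v| - σ ∂²_{ww} v` vanishes identically, and for fixed
`(t,w)` the value `σ = Λ/η` is the unique real number for which it vanishes. -/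
theorem gradient_direction_vanishes_at_optimum (η Λ T : ℝ) (hη : 0 < η) (hΛ : 0 ≤ Λ)
    (hT : 0 < T) (σ : ℝ) (hσ : σ = Λ / η)
    (v : ℝ → ℝ → ℝ) (hv : ∀ t w, v t w = 1 - Real.exp (-η * w - Λ ^ 2 / 2 * (T - t))) :
    ∀ t ∈ Icc (0 : ℝ) T, ∀ w : ℝ,
      (-Λ * |deriv (fun w' => v t w') w| - σ * deriv (deriv (fun w' => v t w')) w = 0) ∧
      (∀ s : ℝ, -Λ * |deriv (fun w' => v t w') w|
          - s * deriv (deriv (fun w' => v t w')) w = 0 → s = Λ / η) := by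
  intro t _ w
  set c : ℝ := Λ ^ 2 / 2 * (T - t) with hc
  have hfun : (fun w' => v t w') = fun w' : ℝ => 1 - Real.exp (-η * w' - c) :=
    funext fun w' => hv t w'
  rw [hfun, deriv_aux, deriv2_aux]
  have hepos : 0 < Real.exp (-η * w - c) := Real.exp_pos _
  have habs : |η * Real.exp (-η * w - c)| = η * Real.exp (-η * w - c) :=
    abs_of_pos (mul_pos hη hepos)
  constructor
  · rw [habs, hσ]
    field_simp
    ring
  · intro s hs
    rw [habs] at hs
    have : (s * η - Λ) * (η * Real.exp (-η * w - c)) = 0 := by linear_combination hs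
    have h0 : s * η - Λ = 0 := by
      rcases mul_eq_zero.1 this with h | h
      · exact h
      · exact absurd h (ne_of_gt (mul_pos hη hepos))
    field_simp
    linarith
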